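/- arXiv:2107.07577 — 2 statements merged into one kernel-verified Lean document; each statement's English description precedes it below -/
import Mathlib

section
/- Let b₁ ≥ 0 be a natural number. Let α : ℂ[x₁,…,x₆] → ℂ[y₁^{±1}, y₂^{±1}, y₃^{±1}] be the ℂ-algebra homomorphism determined by α(x₁) = y₁, α(x₂) = y₂, α(x₃) = y₁y₂^{−1}, α(x₄) = y₁y₂^{−1}, α(x₅) = y₁^{−b₁−1}y₂y₃, α(x₆) = y₃. Then the kernel of α equals the ideal generated by the three binomials x₁ − x₂x₃, x₄ − x₃, and x₂^{b₁} x₃^{b₁+1} x₅ − x₆. -/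
open MvPolynomial

/-- The Laurent monomial `y₁^{v 0} y₂^{v 1} y₃^{v 2}` in the Laurent polynomial ring
`ℂ[y₁^{±1}, y₂^{±1}, y₃^{±1}]`, realized as `AddMonoidAlgebra ℂ (Fin 3 → ℤ)`. -/
noncomputable def laurentMonomial3 (v : Fin 3 → ℤ) : AddMonoidAlgebra ℂ (Fin 3 → ℤ) :=
  AddMonoidAlgebra.single v 1

/-!
The map `α` factors as `ℂ[x₁,…,x₆] → ℂ[t₀,t₁,t₂] → ℂ[y^{±1}]`: first the substitution
`x ↦ (t₀t₁, t₀, t₁, t₁, t₂, t₀^b t₁^{b+1} t₂)`, then the monomial map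
`t₀ ↦ y₂, t₁ ↦ y₁y₂⁻¹, t₂ ↦ y₁^{-b-1}y₂y₃`. The monomial map is injective because its exponent
map `ℕ³ → ℤ³` is, so `ker α` is the kernel of the substitution. That kernel contains the three
binomials, and modulo them every polynomial is congruent to the image of its substitution under
`t ↦ (x₂, x₃, x₅)`; so the binomials generate it.
-/

theorem RingHom.ker_eq_of_le_of_sub_mem {A B F G : Type*} [Ring A] [Semiring B]
    [FunLike F A B] [RingHomClass F A B] [FunLike G B A] [RingHomClass G B A] (f : F) (g : G)
    {I : Ideal A} (hI : I ≤ RingHom.ker f) (hg : ∀ a, a - g (f a) ∈ I) : RingHom.ker f = I := by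
  refine le_antisymm (fun a ha => ?_) hI
  simpa [RingHom.mem_ker.mp ha] using hg a

theorem MvPolynomial.sub_mem_of_forall_X_sub_mem {R σ : Type*} [CommRing R]
    {I : Ideal (MvPolynomial σ R)} (φ : MvPolynomial σ R →ₐ[R] MvPolynomial σ R)
    (h : ∀ i, X i - φ (X i) ∈ I) (p : MvPolynomial σ R) : p - φ p ∈ I := by
  have hφ : (Ideal.Quotient.mkₐ R I).comp φ = Ideal.Quotient.mkₐ R I :=
    algHom_ext fun i => ((Ideal.Quotient.mk_eq_mk_iff_sub_mem _ _).mpr (h i)).symm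
  exact (Ideal.Quotient.mk_eq_mk_iff_sub_mem _ _).mp (DFunLike.congr_fun hφ p).symm

namespace ToricCase312

variable (b : ℕ)

noncomputable def exponentMap : (Fin 3 →₀ ℕ) →+ (Fin 3 → ℤ) where
  toFun d := ![(d 1 : ℤ) - (b + 1) * d 2, (d 0 : ℤ) - d 1 + d 2, (d 2 : ℤ)]
  map_zero' := by funext j; fin_cases j <;> simp
  map_add' d e := by
    funext j
    fin_cases j <;>
      simp only [Fin.zero_eta, Fin.mk_one, Fin.reduceFinMk, Fin.isValue, Finsupp.coe_add,
        Pi.add_apply, Nat.cast_add, Matrix.cons_val_zero, Matrix.cons_val_one, Matrix.cons_val] <;>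
      ring

theorem exponentMap_injective : Function.Injective (exponentMap b) := by
  intro d e h
  have h0 := congrFun h 0
  have h1 := congrFun h 1
  have h2 := congrFun h 2
  simp only [exponentMap, AddMonoidHom.coe_mk, ZeroHom.coe_mk, Matrix.cons_val] at h0 h1 h2
  have e2 : d 2 = e 2 := by exact_mod_cast h2
  rw [e2] at h0
  ext j; fin_cases j <;> simp only [Fin.zero_eta, Fin.mk_one, Fin.reduceFinMk, Fin.isValue] <;> omega

noncomputable def laurentMonomialMap :
    MvPolynomial (Fin 3) ℂ →ₐ[ℂ] AddMonoidAlgebra ℂ (Fin 3 → ℤ) :=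
  AddMonoidAlgebra.mapDomainAlgHom ℂ ℂ (exponentMap b)

theorem laurentMonomialMap_injective : Function.Injective (laurentMonomialMap b) :=
  AddMonoidAlgebra.mapDomain_injective (exponentMap_injective b)

theorem laurentMonomialMap_X (i : Fin 3) :
    laurentMonomialMap b (X i) = laurentMonomial3 (exponentMap b (Finsupp.single i 1)) :=
  AddMonoidAlgebra.mapDomain_single

noncomputable def param : MvPolynomial (Fin 6) ℂ →ₐ[ℂ] MvPolynomial (Fin 3) ℂ :=
  aeval ![X 0 * X 1, X 0, X 1, X 1, X 2, X 0 ^ b * X 1 ^ (b + 1) * X 2]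

theorem laurentMonomialMap_comp_param :
    (laurentMonomialMap b).comp (param b) = aeval
      ![laurentMonomial3 ![1, 0, 0], laurentMonomial3 ![0, 1, 0],
        laurentMonomial3 ![1, -1, 0], laurentMonomial3 ![1, -1, 0],
        laurentMonomial3 ![-((b : ℤ) + 1), 1, 1], laurentMonomial3 ![0, 0, 1]] := by
  refine algHom_ext fun i => ?_
  fin_cases i <;>
    simp [param, laurentMonomialMap_X, laurentMonomial3, AddMonoidAlgebra.single_mul_single,
      AddMonoidAlgebra.single_pow, exponentMap]

noncomputable def paramSection : MvPolynomial (Fin 3) ℂ →ₐ[ℂ] MvPolynomial (Fin 6) ℂ :=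
  aeval ![X 1, X 2, X 4]

noncomputable def binomialIdeal : Ideal (MvPolynomial (Fin 6) ℂ) :=
  Ideal.span {X 0 - X 1 * X 2, X 3 - X 2, X 1 ^ b * X 2 ^ (b + 1) * X 4 - X 5}

theorem binomialIdeal_le_ker_param : binomialIdeal b ≤ RingHom.ker (param b) := by
  rw [binomialIdeal, Ideal.span_le]
  rintro g (rfl | rfl | rfl) <;> simp [param]

theorem sub_paramSection_param_mem (p : MvPolynomial (Fin 6) ℂ) :
    p - paramSection (param b p) ∈ binomialIdeal b := by
  have h₀ : X 0 - X 1 * X 2 ∈ binomialIdeal b := Ideal.subset_span (by simp)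
  have h₃ : X 3 - X 2 ∈ binomialIdeal b := Ideal.subset_span (by simp)
  have h₅ : X 5 - X 1 ^ b * X 2 ^ (b + 1) * X 4 ∈ binomialIdeal b := by
    rw [← neg_sub]
    exact neg_mem (Ideal.subset_span (by simp))
  refine sub_mem_of_forall_X_sub_mem (paramSection.comp (param b)) (fun i => ?_) p
  fin_cases i <;> simp [param, paramSection, h₀, h₃, h₅]

theorem ker_param : RingHom.ker (param b) = binomialIdeal b :=
  RingHom.ker_eq_of_le_of_sub_mem (param b) paramSection (binomialIdeal_le_ker_param b)
    (sub_paramSection_param_mem b)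

end ToricCase312

open ToricCase312 in
theorem toric_ideal_case_3_1_2 (b₁ : ℕ) :
    RingHom.ker (MvPolynomial.aeval
        ![laurentMonomial3 ![1, 0, 0], laurentMonomial3 ![0, 1, 0],
          laurentMonomial3 ![1, -1, 0], laurentMonomial3 ![1, -1, 0],
          laurentMonomial3 ![-((b₁ : ℤ) + 1), 1, 1], laurentMonomial3 ![0, 0, 1]] :
      MvPolynomial (Fin 6) ℂ →ₐ[ℂ] AddMonoidAlgebra ℂ (Fin 3 → ℤ)) =
    Ideal.span {(X 0 - X 1 * X 2 : MvPolynomial (Fin 6) ℂ),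
      X 3 - X 2, X 1 ^ b₁ * X 2 ^ (b₁ + 1) * X 4 - X 5} := by
  rw [← laurentMonomialMap_comp_param, ← RingHom.ker_coe_toRingHom, AlgHom.comp_toRingHom]
  exact (RingHom.ker_comp_of_injective _ (laurentMonomialMap_injective b₁)).trans (ker_param b₁)
end

section
/- Let b₁ ≥ 0 be a natural number. Let α : ℂ[x₁,…,x₆] → ℂ[y₁^{±1}, y₂^{±1}, y₃^{±1}] be the ℂ-algebra homomorphism determined by α(x₁) = y₁, α(x₂) = y₂, α(x₃) = y₂, α(x₄) = y₁y₂^{−1}, α(x₅) = y₁^{−b₁−1}y₂y₃, α(x₆) = y₃. Then the kernel of α equals the ideal generated by the three binomials x₁ − x₂x₄, x₃ − x₂, and x₂^{b₁} x₄^{b₁+1} x₅ − x₆. -/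
/-!
The images of `x₂, x₄, x₅` are the Laurent monomials with exponents `(0,1,0)`, `(1,-1,0)`,
`(-b₁-1,1,1)`, a basis of `ℤ³` (determinant `-1`), and the other variables map to monomials in
them: `α(x₁) = α(x₂ x₄)`, `α(x₃) = α(x₂)`, `α(x₆) = α(x₂^{b₁} x₄^{b₁+1} x₅)`. Hence `α` factors as
the substitution `ℂ[x₁,…,x₆] → ℂ[t₀,t₁,t₂]` followed by the injective map `tⱼ ↦ y^{vⱼ}`. The
kernel of the substitution is the ideal of the three binomials, because modulo that ideal every
variable agrees with its image under the section `t₀, t₁, t₂ ↦ x₂, x₄, x₅`.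
-/

open MvPolynomial

namespace MvPolynomial

section Kernel

variable {R S ι : Type*} [CommRing R] [Semiring S] [Algebra R S]

theorem sub_mem_of_forall_X_sub_mem_s8 {I : Ideal (MvPolynomial ι R)}
    {e : MvPolynomial ι R →ₐ[R] MvPolynomial ι R} (h : ∀ i, X i - e (X i) ∈ I)
    (p : MvPolynomial ι R) : p - e p ∈ I := by
  have he : (Ideal.Quotient.mkₐ R I).comp e = Ideal.Quotient.mkₐ R I :=
    algHom_ext fun i => ((Ideal.Quotient.mk_eq_mk_iff_sub_mem _ _).2 (h i)).symm
  exact (Ideal.Quotient.mk_eq_mk_iff_sub_mem _ _).1 (DFunLike.congr_fun he p).symm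

theorem ker_eq_of_le_of_forall_X_sub_mem {f : MvPolynomial ι R →ₐ[R] S}
    (g : S →ₐ[R] MvPolynomial ι R) {I : Ideal (MvPolynomial ι R)} (hI : I ≤ RingHom.ker f)
    (h : ∀ i, X i - g (f (X i)) ∈ I) : RingHom.ker f = I := by
  refine le_antisymm (fun p hp => ?_) hI
  simpa [RingHom.mem_ker.1 hp] using sub_mem_of_forall_X_sub_mem_s8 (e := g.comp f) h p

end Kernel

section Monomials

variable {k ι M : Type*} [CommSemiring k] [AddCommMonoid M]

theorem aeval_single_injective {v : ι → M} (hv : LinearIndependent ℕ v) :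
    Function.Injective (aeval fun i => AddMonoidAlgebra.single (v i) 1 :
      MvPolynomial ι k →ₐ[k] AddMonoidAlgebra k M) := by
  have h : (aeval fun i => AddMonoidAlgebra.single (v i) 1 : MvPolynomial ι k →ₐ[k] _) =
      AddMonoidAlgebra.mapDomainAlgHom k k (Finsupp.linearCombination ℕ v).toAddMonoidHom :=
    algHom_ext fun i => by
      rw [aeval_X, AddMonoidAlgebra.mapDomainAlgHom_apply]
      change _ = AddMonoidAlgebra.mapDomain _ (AddMonoidAlgebra.single (Finsupp.single i 1) 1)
      rw [AddMonoidAlgebra.mapDomain_single]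
      simp
  rw [h]
  exact AddMonoidAlgebra.mapDomain_injective hv

end Monomials

end MvPolynomial

/-- The exponent vectors of `α(x₂)`, `α(x₄)`, `α(x₅)`. -/
def case315Exponents (b₁ : ℕ) : Fin 3 → Fin 3 → ℤ :=
  ![![0, 1, 0], ![1, -1, 0], ![-((b₁ : ℤ) + 1), 1, 1]]

theorem linearIndependent_case315Exponents (b₁ : ℕ) :
    LinearIndependent ℕ (case315Exponents b₁) :=
  (Matrix.linearIndependent_rows_of_det_ne_zero (A := Matrix.of (case315Exponents b₁))
    (by simp [Matrix.det_fin_three, case315Exponents])).restrict_scalars' ℕ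

noncomputable def case315Param (b₁ : ℕ) : MvPolynomial (Fin 6) ℂ →ₐ[ℂ] MvPolynomial (Fin 3) ℂ :=
  aeval ![X 0 * X 1, X 0, X 0, X 1, X 2, X 0 ^ b₁ * X 1 ^ (b₁ + 1) * X 2]

theorem aeval_eq_comp_case315Param (b₁ : ℕ) :
    (aeval ![laurentMonomial3 ![1, 0, 0], laurentMonomial3 ![0, 1, 0],
          laurentMonomial3 ![0, 1, 0], laurentMonomial3 ![1, -1, 0],
          laurentMonomial3 ![-((b₁ : ℤ) + 1), 1, 1], laurentMonomial3 ![0, 0, 1]] :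
      MvPolynomial (Fin 6) ℂ →ₐ[ℂ] AddMonoidAlgebra ℂ (Fin 3 → ℤ)) =
    (aeval fun i => laurentMonomial3 (case315Exponents b₁ i)).comp (case315Param b₁) := by
  rw [case315Param, comp_aeval]
  congr 1
  funext i
  fin_cases i <;> simp [laurentMonomial3, case315Exponents, AddMonoidAlgebra.single_mul_single]

theorem ker_case315Param (b₁ : ℕ) :
    RingHom.ker (case315Param b₁) = Ideal.span {(X 0 - X 1 * X 3 : MvPolynomial (Fin 6) ℂ),
      X 2 - X 1, X 1 ^ b₁ * X 3 ^ (b₁ + 1) * X 4 - X 5} := by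
  refine ker_eq_of_le_of_forall_X_sub_mem (aeval ![X 1, X 3, X 4]) ?_ fun i => ?_
  · rw [Ideal.span_le]
    rintro p (rfl | rfl | rfl) <;> simp [case315Param]
  · fin_cases i <;> simp [case315Param]
    · exact Ideal.subset_span (by simp)
    · exact Ideal.subset_span (by simp)
    · rw [← neg_mem_iff, neg_sub]
      exact Ideal.subset_span (by simp)

theorem toric_ideal_case_3_1_5 (b₁ : ℕ) :
    RingHom.ker (MvPolynomial.aeval
        ![laurentMonomial3 ![1, 0, 0], laurentMonomial3 ![0, 1, 0],
          laurentMonomial3 ![0, 1, 0], laurentMonomial3 ![1, -1, 0],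
          laurentMonomial3 ![-((b₁ : ℤ) + 1), 1, 1], laurentMonomial3 ![0, 0, 1]] :
      MvPolynomial (Fin 6) ℂ →ₐ[ℂ] AddMonoidAlgebra ℂ (Fin 3 → ℤ)) =
    Ideal.span {(X 0 - X 1 * X 3 : MvPolynomial (Fin 6) ℂ),
      X 2 - X 1, X 1 ^ b₁ * X 3 ^ (b₁ + 1) * X 4 - X 5} := by
  have hinj : Function.Injective (aeval fun i => laurentMonomial3 (case315Exponents b₁ i) :
      MvPolynomial (Fin 3) ℂ →ₐ[ℂ] _) :=
    aeval_single_injective (linearIndependent_case315Exponents b₁)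
  rw [aeval_eq_comp_case315Param, ← ker_case315Param]
  exact RingHom.ker_comp_of_injective (case315Param b₁).toRingHom hinj
end
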